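/- The Kottman constant is continuous with respect to the Kadets metric: for all infinite-dimensional Banach spaces X and Y, |K(X) − K(Y)| ≤ 2·d_K(X, Y). -/
import Mathlib


noncomputable section
open Metric Set

/-- The Kottman constant of a normed space. -/
def kottman (X : Type*) [NormedAddCommGroup X] : ℝ :=
  sSup {σ : ℝ | 0 < σ ∧ ∃ x : ℕ → X, (∀ n, ‖x n‖ ≤ 1) ∧
    ∀ n m, n ≠ m → σ ≤ ‖x n - x m‖}

def symKottman (X : Type*) [NormedAddCommGroup X] : ℝ :=
  sSup {σ : ℝ | 0 < σ ∧ ∃ x : ℕ → X, (∀ n, ‖x n‖ ≤ 1) ∧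
    ∀ n m, n ≠ m → σ ≤ ‖x n - x m‖ ∧ σ ≤ ‖x n + x m‖}

def finKottman (X : Type*) [NormedAddCommGroup X] : ℝ :=
  sSup {σ : ℝ | 0 < σ ∧ ∀ N : ℕ, ∃ x : Fin N → X, (∀ n, ‖x n‖ ≤ 1) ∧
    ∀ n m, n ≠ m → σ ≤ ‖x n - x m‖}

/-- The gap between two subsets (typically closed subspaces) of a normed space,
measured between their unit balls. -/
def gap {Z : Type*} [NormedAddCommGroup Z] (M N : Set Z) : ℝ :=
  max (sSup ((fun x => Metric.infDist x (N ∩ Metric.closedBall 0 1)) '' (M ∩ Metric.closedBall 0 1)))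
      (sSup ((fun y => Metric.infDist y (M ∩ Metric.closedBall 0 1)) '' (N ∩ Metric.closedBall 0 1)))

/-- The Kadets distance between two Banach spaces. -/
def kadets (X Y : Type*) [NormedAddCommGroup X] [NormedSpace ℝ X]
    [NormedAddCommGroup Y] [NormedSpace ℝ Y] : ℝ :=
  sInf {d : ℝ | ∃ (W : Type) (nW : NormedAddCommGroup W) (sW : NormedSpace ℝ W)
    (cW : CompleteSpace W) (i : X →ₗᵢ[ℝ] W) (j : Y →ₗᵢ[ℝ] W),
    d = gap (Set.range i) (Set.range j)}

/-- The isomorphic Kottman constant: infimum of Kottman constants over all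
Banach spaces isomorphic to `X`. -/
def ikottman (X : Type) [NormedAddCommGroup X] [NormedSpace ℝ X] : ℝ :=
  sInf {k : ℝ | ∃ (V : Type) (nV : NormedAddCommGroup V) (sV : NormedSpace ℝ V)
    (cV : CompleteSpace V) (e : X ≃L[ℝ] V), k = kottman V}

/-- Whitley's thickness constant. -/
def whitley (X : Type*) [NormedAddCommGroup X] : ℝ :=
  sInf {ε : ℝ | 0 < ε ∧ ∃ F : Finset X, (∀ f ∈ F, ‖f‖ = 1) ∧
    ∀ x : X, ‖x‖ = 1 → ∃ f ∈ F, ‖x - f‖ ≤ ε}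

/-- The James constant. -/
def james (X : Type*) [NormedAddCommGroup X] : ℝ :=
  sSup {t : ℝ | ∃ x y : X, ‖x‖ = 1 ∧ ‖y‖ = 1 ∧ t = min ‖x - y‖ ‖x + y‖}

def gconst (X : Type*) [NormedAddCommGroup X] : ℝ :=
  sInf {t : ℝ | ∃ x y : X, ‖x‖ = 1 ∧ ‖y‖ = 1 ∧ t = max ‖x - y‖ ‖x + y‖}

/-! ### Auxiliary lemmas -/

/-- The Kottman set of a normed space. -/
def KSet (X : Type*) [NormedAddCommGroup X] : Set ℝ :=
  {σ : ℝ | 0 < σ ∧ ∃ x : ℕ → X, (∀ n, ‖x n‖ ≤ 1) ∧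
    ∀ n m, n ≠ m → σ ≤ ‖x n - x m‖}

lemma kottman_eq_sSup_KSet (X : Type*) [NormedAddCommGroup X] :
    kottman X = sSup (KSet X) := rfl

lemma KSet_bddAbove (X : Type*) [NormedAddCommGroup X] : BddAbove (KSet X) := by
  refine ⟨2, ?_⟩
  rintro σ ⟨hσ, x, hx1, hsep⟩
  have h := hsep 0 1 (by norm_num)
  have := norm_sub_le (x 0) (x 1)
  have h0 := hx1 0
  have h1 := hx1 1
  linarith

lemma third_mem_KSet (X : Type*) [NormedAddCommGroup X] [NormedSpace ℝ X]
    (hX : ¬ FiniteDimensional ℝ X) : (1/3 : ℝ) ∈ KSet X := by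
  obtain ⟨f, hfR, hfsep⟩ := exists_seq_norm_le_one_le_norm_sub' (c := (2:ℝ))
    (by norm_num) (R := 3) (by norm_num) hX
  refine ⟨by norm_num, fun n => (3:ℝ)⁻¹ • f n, fun n => ?_, fun n m hnm => ?_⟩
  · rw [norm_smul]
    have := hfR n
    simp only [norm_inv, Real.norm_ofNat]
    nlinarith [norm_nonneg (f n)]
  · have h1 := hfsep hnm
    rw [← smul_sub, norm_smul]
    simp only [norm_inv, Real.norm_ofNat]
    nlinarith

lemma kottman_pos (X : Type*) [NormedAddCommGroup X] [NormedSpace ℝ X]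
    (hX : ¬ FiniteDimensional ℝ X) : (1/3 : ℝ) ≤ kottman X :=
  le_csSup (KSet_bddAbove X) (third_mem_KSet X hX)

lemma gap_comm {Z : Type*} [NormedAddCommGroup Z] (M N : Set Z) :
    gap M N = gap N M := max_comm _ _

/-- Key lemma: `K(X) ≤ K(Y) + 2 g(iX, jY)`. -/
lemma kottman_le_of_gap {X Y W : Type*}
    [NormedAddCommGroup X] [NormedSpace ℝ X]
    [NormedAddCommGroup Y] [NormedSpace ℝ Y]
    [NormedAddCommGroup W] [NormedSpace ℝ W]
    (hX : ¬ FiniteDimensional ℝ X) (hY : ¬ FiniteDimensional ℝ Y)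
    (i : X →ₗᵢ[ℝ] W) (j : Y →ₗᵢ[ℝ] W) :
    kottman X ≤ kottman Y + 2 * gap (Set.range i) (Set.range j) := by
  set g := gap (Set.range i) (Set.range j) with hg
  set SN : Set W := Set.range j ∩ Metric.closedBall 0 1 with hSN
  have hSNne : SN.Nonempty := ⟨0, ⟨0, by simp⟩, by simp⟩
  rw [kottman_eq_sSup_KSet]
  refine csSup_le ⟨_, third_mem_KSet X hX⟩ ?_
  rintro σ ⟨hσ, x, hx1, hsep⟩
  -- it suffices to show σ - 2g ≤ kottman Y
  have key : σ - 2 * g ≤ kottman Y := by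
    refine le_of_forall_pos_le_add fun ε hε => ?_
    -- each i (x n) has infDist to SN at most g
    have hinf : ∀ n, Metric.infDist (i (x n)) SN < g + ε / 4 := by
      intro n
      have hmem : i (x n) ∈ Set.range i ∩ Metric.closedBall 0 1 := by
        refine ⟨⟨x n, rfl⟩, ?_⟩
        simp only [Metric.mem_closedBall, dist_zero_right, i.norm_map]
        exact hx1 n
      have hbdd : BddAbove ((fun x => Metric.infDist x SN) ''
          (Set.range i ∩ Metric.closedBall 0 1)) := by
        refine ⟨1, ?_⟩
        rintro r ⟨z, ⟨-, hz⟩, rfl⟩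
        have h0 : (0:W) ∈ SN := ⟨⟨0, by simp⟩, by simp⟩
        calc Metric.infDist z SN ≤ dist z 0 := Metric.infDist_le_dist_of_mem h0
          _ ≤ 1 := by simpa [Metric.mem_closedBall] using hz
      have h1 : Metric.infDist (i (x n)) SN ≤
          sSup ((fun x => Metric.infDist x SN) '' (Set.range i ∩ Metric.closedBall 0 1)) :=
        le_csSup hbdd ⟨i (x n), hmem, rfl⟩
      have h2 : sSup ((fun x => Metric.infDist x SN) ''
          (Set.range i ∩ Metric.closedBall 0 1)) ≤ g := le_max_left _ _
      linarith
    have hchoose : ∀ n, ∃ y : Y, ‖y‖ ≤ 1 ∧ dist (i (x n)) (j y) < g + ε / 4 := by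
      intro n
      obtain ⟨w, hw, hwd⟩ := (Metric.infDist_lt_iff hSNne).mp (hinf n)
      obtain ⟨⟨y, rfl⟩, hwball⟩ := hw
      exact ⟨y, by simpa [Metric.mem_closedBall, j.norm_map] using hwball, hwd⟩
    choose y hy1 hy2 using hchoose
    by_cases hpos : 0 < σ - 2 * g - ε / 2
    · have hmem : σ - 2 * g - ε / 2 ∈ KSet Y := by
        refine ⟨hpos, y, hy1, fun n m hnm => ?_⟩
        have hsepnm := hsep n m hnm
        have h1 := hy2 n
        have h2 := hy2 m
        have e1 : ‖y n - y m‖ = ‖j (y n) - j (y m)‖ := by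
          rw [← j.map_sub, j.norm_map]
        have e2 : ‖i (x n) - i (x m)‖ = ‖x n - x m‖ := by
          rw [← i.map_sub, i.norm_map]
        have t1 : ‖i (x n) - i (x m)‖ ≤
            ‖i (x n) - j (y n)‖ + ‖j (y n) - j (y m)‖ + ‖j (y m) - i (x m)‖ := by
          have := norm_sub_le_norm_sub_add_norm_sub (i (x n)) (j (y n)) (i (x m))
          have := norm_sub_le_norm_sub_add_norm_sub (j (y n)) (j (y m)) (i (x m))
          linarith
        rw [dist_eq_norm] at h1 h2
        have h2' : ‖j (y m) - i (x m)‖ < g + ε / 4 := by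
          rw [norm_sub_rev]; exact h2
        rw [e2, ← e1] at t1
        linarith
      have := le_csSup (KSet_bddAbove Y) hmem
      rw [kottman_eq_sSup_KSet]
      linarith
    · have := kottman_pos Y hY
      have hg0 : (0:ℝ) < kottman Y := lt_of_lt_of_le (by norm_num) this
      push_neg at hpos
      linarith
  linarith

/-- The Kottman constant is 2-Lipschitz with respect to the Kadets metric. -/
theorem abs_kottman_sub_kottman_le_two_mul_kadets
    (X Y : Type) [NormedAddCommGroup X] [NormedSpace ℝ X] [CompleteSpace X]
    [NormedAddCommGroup Y] [NormedSpace ℝ Y] [CompleteSpace Y]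
    (hX : ¬ FiniteDimensional ℝ X) (hY : ¬ FiniteDimensional ℝ Y) :
    |kottman X - kottman Y| ≤ 2 * kadets X Y := by
  set D := {d : ℝ | ∃ (W : Type) (nW : NormedAddCommGroup W) (sW : NormedSpace ℝ W)
    (cW : CompleteSpace W) (i : X →ₗᵢ[ℝ] W) (j : Y →ₗᵢ[ℝ] W),
    d = gap (Set.range i) (Set.range j)} with hD
  have hDne : D.Nonempty := by
    refine ⟨_, X × Y, inferInstance, inferInstance, inferInstance,
      ⟨LinearMap.inl ℝ X Y, fun x => ?_⟩, ⟨LinearMap.inr ℝ X Y, fun y => ?_⟩, rfl⟩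
    · simp [Prod.norm_def]
    · simp [Prod.norm_def]
  have hbound : ∀ d ∈ D, |kottman X - kottman Y| ≤ 2 * d := by
    rintro d ⟨W, nW, sW, cW, i, j, rfl⟩
    rw [abs_sub_le_iff]
    constructor
    · have := kottman_le_of_gap hX hY i j
      linarith
    · have := kottman_le_of_gap hY hX j i
      rw [gap_comm] at this
      linarith
  have hlow : |kottman X - kottman Y| / 2 ≤ sInf D := by
    refine le_csInf hDne fun d hd => ?_
    have := hbound d hd
    linarith
  have : kadets X Y = sInf D := rfl
  rw [this]
  linarith
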